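/- arXiv:1703.05781 — 6 statements merged into one kernel-verified Lean document; each statement's English description precedes it below -/
import Mathlib

section
/- If K is a linearly ordered field and G is a linearly ordered group, then the group algebra K[G] can be given a linear order making it a linearly ordered ring: writing elements as finite sums of coefficients times group elements with group elements in decreasing order, compare lexicographically by coefficients. In particular, K[G] admits a compatible linear order on its additive group such that products of positive elements with positive elements preserve order. -/
/-!
Order `K[G]` by the sign of the coefficient at the largest element of the support. These
elements, together with `0`, form a positive cone: it is closed under addition, and exactly one
of `f`, `-f` lies in it when `f ≠ 0`. Closure under multiplication is where the two-sided
invariance of the order on `G` enters: if `m` and `n` are the tops of the supports of `f` and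
`g`, then `x * y < m * n` for all other pairs of support elements, so the top coefficient of
`f * g` sits at `m * n` and is the product of the top coefficients.
-/

open Finset Pointwise

namespace MonoidAlgebra

variable {K G : Type*}

def HasPosLeadingCoeff [Semiring K] [PartialOrder K] [LT G] (f : MonoidAlgebra K G) : Prop :=
  ∃ m, 0 < f.coeff m ∧ ∀ g, m < g → f.coeff g = 0

theorem le_of_coeff_ne_zero_of_forall_lt [Semiring K] [LinearOrder G] {f : MonoidAlgebra K G} {m : G}
    (htop : ∀ g, m < g → f.coeff g = 0) {g : G} (hg : f.coeff g ≠ 0) : g ≤ m :=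
  not_lt.mp fun h ↦ hg (htop g h)

theorem hasPosLeadingCoeff_one [Semiring K] [PartialOrder K] [ZeroLEOneClass K] [NeZero (1 : K)]
    [One G] [LinearOrder G] : HasPosLeadingCoeff (1 : MonoidAlgebra K G) :=
  ⟨1, by simp, fun g hg ↦ by simp [one_def, coeff_single, hg.ne]⟩

namespace HasPosLeadingCoeff

theorem ne_zero [Semiring K] [PartialOrder K] [LT G] {f : MonoidAlgebra K G}
    (hf : HasPosLeadingCoeff f) : f ≠ 0 := by
  rintro rfl
  obtain ⟨m, hm, -⟩ := hf
  simp at hm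

section Add

variable [Ring K] [LinearOrder K] [IsOrderedAddMonoid K] [LinearOrder G] {f g : MonoidAlgebra K G}

theorem add (hf : HasPosLeadingCoeff f) (hg : HasPosLeadingCoeff g) :
    HasPosLeadingCoeff (f + g) := by
  obtain ⟨m, hfm, hf⟩ := hf
  obtain ⟨n, hgn, hg⟩ := hg
  wlog hmn : m ≤ n generalizing f g m n
  · simpa only [add_comm f] using this n hgn hg m hfm hf (le_of_not_ge hmn)
  refine ⟨n, ?_, fun x hx ↦ ?_⟩
  · have hfn : 0 ≤ f.coeff n := by
      rcases hmn.eq_or_lt with rfl | hlt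
      exacts [hfm.le, (hf n hlt).ge]
    rw [coeff_add, Finsupp.add_apply]
    exact add_pos_of_nonneg_of_pos hfn hgn
  · rw [coeff_add, Finsupp.add_apply, hf x (hmn.trans_lt hx), hg x hx, add_zero]

theorem not_neg (hf : HasPosLeadingCoeff f) : ¬ HasPosLeadingCoeff (-f) := by
  rintro ⟨n, hn, hn_top⟩
  obtain ⟨m, hm, hm_top⟩ := hf
  simp only [coeff_neg, Finsupp.neg_apply, neg_eq_zero] at hn hn_top
  have hmn : m = n := le_antisymm (le_of_coeff_ne_zero_of_forall_lt hn_top hm.ne')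
    (le_of_coeff_ne_zero_of_forall_lt hm_top (neg_pos.mp hn).ne)
  exact (neg_pos.mp hn).not_gt (hmn ▸ hm)

end Add

section Mul

variable [Semiring K] [PartialOrder K] [PosMulStrictMono K] [Monoid G] [LinearOrder G]
  [MulLeftStrictMono G] [MulRightStrictMono G] {f g : MonoidAlgebra K G}

theorem mul (hf : HasPosLeadingCoeff f) (hg : HasPosLeadingCoeff g) :
    HasPosLeadingCoeff (f * g) := by
  classical
  have := mulLeftMono_of_mulLeftStrictMono G
  have := mulRightMono_of_mulRightStrictMono G
  obtain ⟨m, hfm, hf⟩ := hf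
  obtain ⟨n, hgn, hg⟩ := hg
  have hle {x y : G} (hx : x ∈ f.coeff.support) (hy : y ∈ g.coeff.support) : x ≤ m ∧ y ≤ n :=
    ⟨le_of_coeff_ne_zero_of_forall_lt hf (Finsupp.mem_support_iff.mp hx),
      le_of_coeff_ne_zero_of_forall_lt hg (Finsupp.mem_support_iff.mp hy)⟩
  have hunique : UniqueMul f.coeff.support g.coeff.support m n := by
    intro x y hx hy hxy
    obtain ⟨hxm, hyn⟩ := hle hx hy
    rcases hxm.lt_or_eq with hxm | rfl
    · exact absurd hxy (mul_lt_mul_of_lt_of_le hxm hyn).ne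
    rcases hyn.lt_or_eq with hyn | rfl
    · exact absurd hxy (mul_lt_mul_of_le_of_lt le_rfl hyn).ne
    exact ⟨rfl, rfl⟩
  refine ⟨m * n, ?_, fun z hz ↦ Finsupp.notMem_support_iff.mp fun hmem ↦ ?_⟩
  · rw [coeff_mul_mul_of_uniqueMul hunique]
    exact mul_pos hfm hgn
  · obtain ⟨x, hx, y, hy, rfl⟩ := mem_mul.mp (support_coeff_mul_subset f g hmem)
    obtain ⟨hxm, hyn⟩ := hle hx hy
    exact (mul_le_mul' hxm hyn).not_gt hz

end Mul

end HasPosLeadingCoeff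

theorem hasPosLeadingCoeff_or_neg [Ring K] [LinearOrder K] [IsOrderedAddMonoid K] [LinearOrder G]
    {f : MonoidAlgebra K G} (hf : f ≠ 0) : HasPosLeadingCoeff f ∨ HasPosLeadingCoeff (-f) := by
  have hsupp : f.coeff.support.Nonempty := by simpa using hf
  set m := f.coeff.support.max' hsupp
  have hm : f.coeff m ≠ 0 := Finsupp.mem_support_iff.mp (max'_mem _ hsupp)
  have htop (g : G) (hg : m < g) : f.coeff g = 0 :=
    Finsupp.notMem_support_iff.mp fun hmem ↦ (le_max' _ g hmem).not_gt hg
  rcases hm.lt_or_gt with hneg | hpos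
  · exact .inr ⟨m, by simpa using hneg, fun g hg ↦ by simp [htop g hg]⟩
  · exact .inl ⟨m, hpos, htop⟩

section Cone

variable (K G) [Ring K] [LinearOrder K] [IsOrderedAddMonoid K] [LinearOrder G]

def nonnegCone : AddGroupCone (MonoidAlgebra K G) where
  carrier := {f | f = 0 ∨ HasPosLeadingCoeff f}
  zero_mem' := .inl rfl
  add_mem' := by
    rintro f g (rfl | hf) (rfl | hg)
    exacts [.inl (add_zero 0), .inr (by rwa [zero_add]), .inr (by rwa [add_zero]), .inr (hf.add hg)]
  eq_zero_of_mem_of_neg_mem' := by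
    rintro f (rfl | hf) (hnf | hnf)
    exacts [rfl, rfl, absurd (neg_eq_zero.mp hnf) hf.ne_zero, (hf.not_neg hnf).elim]

variable {K G} in
theorem mem_nonnegCone {f : MonoidAlgebra K G} :
    f ∈ nonnegCone K G ↔ f = 0 ∨ HasPosLeadingCoeff f :=
  Iff.rfl

instance : HasMemOrNegMem (nonnegCone K G) where
  mem_or_neg_mem f := by
    rcases eq_or_ne f 0 with rfl | hf
    · exact .inl (.inl rfl)
    · exact (hasPosLeadingCoeff_or_neg hf).imp .inr .inr

open Classical in
noncomputable abbrev lexLinearOrder : LinearOrder (MonoidAlgebra K G) :=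
  LinearOrder.mkOfAddGroupCone (nonnegCone K G)

variable {K G} in
theorem lexLinearOrder_pos_iff {f : MonoidAlgebra K G} :
    (lexLinearOrder K G).lt 0 f ↔ HasPosLeadingCoeff f := by
  let := lexLinearOrder K G
  change 0 < f ↔ _
  rw [lt_iff_le_not_ge]
  change f - 0 ∈ nonnegCone K G ∧ 0 - f ∉ nonnegCone K G ↔ _
  simp only [sub_zero, zero_sub, mem_nonnegCone, not_or, neg_eq_zero]
  constructor
  · rintro ⟨rfl | hf, hf0, -⟩
    exacts [absurd rfl hf0, hf]
  · exact fun hf ↦ ⟨.inr hf, hf.ne_zero, hf.not_neg⟩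

end Cone

theorem isStrictOrderedRing_lexLinearOrder [Ring K] [LinearOrder K] [IsStrictOrderedRing K]
    [Monoid G] [LinearOrder G] [MulLeftStrictMono G] [MulRightStrictMono G] :
    letI := lexLinearOrder K G
    IsStrictOrderedRing (MonoidAlgebra K G) := by
  let := lexLinearOrder K G
  have := IsOrderedAddMonoid.mkOfCone (nonnegCone K G)
  have : ZeroLEOneClass (MonoidAlgebra K G) :=
    ⟨(lexLinearOrder_pos_iff.mpr hasPosLeadingCoeff_one).le⟩
  exact .of_mul_pos fun a b ha hb ↦
    lexLinearOrder_pos_iff.mpr ((lexLinearOrder_pos_iff.mp ha).mul (lexLinearOrder_pos_iff.mp hb))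

end MonoidAlgebra

theorem group_algebra_orderable (K G : Type*) [Field K] [LinearOrder K] [IsStrictOrderedRing K] [Group G]
    [LinearOrder G] (hG : ∀ a b x y : G, x < y → a * x * b < a * y * b) :
    ∃ lo : LinearOrder (MonoidAlgebra K G),
      (∀ x y z : MonoidAlgebra K G, lo.lt x y → lo.lt (x + z) (y + z)) ∧
      (∀ a x y : MonoidAlgebra K G, lo.lt 0 a → lo.lt x y →
        lo.lt (a * x) (a * y) ∧ lo.lt (x * a) (y * a)) := by
  have : MulLeftStrictMono G := ⟨fun a _ _ h ↦ by simpa using hG a 1 _ _ h⟩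
  have : MulRightStrictMono G := ⟨fun b _ _ h ↦ by simpa using hG 1 b _ _ h⟩
  let := MonoidAlgebra.lexLinearOrder K G
  have := MonoidAlgebra.isStrictOrderedRing_lexLinearOrder (K := K) (G := G)
  exact ⟨_, fun x y z h ↦ add_lt_add_left h z,
    fun a x y ha h ↦ ⟨mul_lt_mul_of_pos_left h ha, mul_lt_mul_of_pos_right h ha⟩⟩
end

section
/- If K is a linearly ordered field and G is a linearly ordered group, then the group algebra K[G] has no zero divisors. -/
theorem mulLeftStrictMono_of_mul_lt_mul_mul {G : Type*} [MulOneClass G] [LT G]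
    (h : ∀ a b x y : G, x < y → a * x * b < a * y * b) : MulLeftStrictMono G :=
  ⟨fun a x y hxy => by simpa only [mul_one] using h a 1 x y hxy⟩

theorem group_algebra_no_zero_divisors_general (K G : Type*) [Field K] [Group G]
    [LinearOrder G] (hG : ∀ a b x y : G, x < y → a * x * b < a * y * b) :
    ∀ f g : MonoidAlgebra K G, f ≠ 0 → g ≠ 0 → f * g ≠ 0 := by
  have := mulLeftStrictMono_of_mul_lt_mul_mul hG
  -- The leading-term argument is `TwoUniqueProds.of_covariant_right`: in `A * B` the product of
  -- the maxima is uniquely attained, so `MonoidAlgebra.instNoZeroDivisorsOfUniqueProds` applies.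
  intro f g hf hg
  exact mul_ne_zero hf hg

theorem group_algebra_no_zero_divisors (K G : Type*) [Field K] [LinearOrder K] [IsStrictOrderedRing K] [Group G]
    [LinearOrder G] (hG : ∀ a b x y : G, x < y → a * x * b < a * y * b) :
    ∀ f g : MonoidAlgebra K G, f ≠ 0 → g ≠ 0 → f * g ≠ 0 :=
  group_algebra_no_zero_divisors_general K G hG
end

section
/- Let R be a linearly ordered commutative ring with unit. The group of n×n upper triangular matrices over R with positive invertible diagonal entries admits a linear order making it a linearly ordered group (i.e., the order is invariant under left and right multiplication). -/
/-!
Order matrices lexicographically along the *diagonal-major* order of positions: `(i, j)` comes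
before `(i', j')` if `j - i < j' - i'`, or `j - i = j' - i'` and `i < i'`; in particular the
diagonal comes first. For upper triangular `A`, `B`, the entry `(A * M * B) i j` depends only on
the entries `M k l` with `i ≤ k` and `l ≤ j`, and all of them except `M i j` come strictly
before `(i, j)`. So if `X` and `Y` first differ at `(i, j)`, then `A * X * B` and `A * Y * B` agree
before `(i, j)` and differ there by `A i i * (X i j - Y i j) * B j j`, which has the sign of
`X i j - Y i j` because the diagonals of `A` and `B` are positive.
-/

open Function

namespace Matrix

variable {ι R : Type*} [Fintype ι] [LinearOrder ι] [NonUnitalNonAssocSemiring R]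

theorem BlockTriangular.mul_mul_apply_of_eq_zero {A M B : Matrix ι ι R}
    (hA : A.BlockTriangular id) (hB : B.BlockTriangular id) {i j : ι}
    (hM : ∀ k l, i ≤ k → l ≤ j → (k, l) ≠ (i, j) → M k l = 0) :
    (A * M * B) i j = A i i * M i j * B j j := by
  simp only [mul_apply]
  rw [Finset.sum_eq_single j, Finset.sum_eq_single i]
  · intro k _ hki
    rcases lt_or_ge k i with hki' | hik
    · rw [hA hki', zero_mul]
    · rw [hM k j hik le_rfl (by simp [hki]), mul_zero]
  · exact fun h => absurd (Finset.mem_univ i) h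
  · intro l _ hlj
    rcases lt_or_ge j l with hjl | hlj'
    · rw [hB hjl, mul_zero]
    · refine mul_eq_zero_of_left (Finset.sum_eq_zero fun k _ => ?_) _
      rcases lt_or_ge k i with hki | hik
      · rw [hA hki, zero_mul]
      · rw [hM k l hik hlj' (by simp [hlj]), mul_zero]
  · exact fun h => absurd (Finset.mem_univ j) h

end Matrix

structure DiagMajor (n : ℕ) where
  row : Fin n
  col : Fin n

namespace DiagMajor

variable {n : ℕ}

def key (p : DiagMajor n) : ℤ ×ₗ Fin n := toLex (((p.col : ℕ) : ℤ) - p.row, p.row)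

theorem key_injective : Injective (key (n := n)) := by
  rintro ⟨i, j⟩ ⟨i', j'⟩ h
  simp only [key, toLex_inj, Prod.mk.injEq] at h
  obtain ⟨hd, rfl⟩ := h
  simp only [mk.injEq, Fin.ext_iff, true_and]
  omega

instance : LinearOrder (DiagMajor n) := LinearOrder.lift' key key_injective

instance : Finite (DiagMajor n) :=
  Finite.of_injective (fun p : DiagMajor n => (p.row, p.col)) fun p q h => by
    cases p; cases q; simp_all

theorem mk_lt_mk_of_le_of_le {i j k l : Fin n} (hik : i ≤ k) (hlj : l ≤ j) (hne : (k, l) ≠ (i, j)) :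
    (⟨k, l⟩ : DiagMajor n) < ⟨i, j⟩ := by
  have hik' : (i : ℕ) ≤ k := hik
  have hlj' : (l : ℕ) ≤ j := hlj
  have hlt : ((l : ℕ) : ℤ) - k < ((j : ℕ) : ℤ) - i := by
    by_contra! hge
    exact hne (by simp only [Prod.mk.injEq, Fin.ext_iff]; omega)
  exact Prod.Lex.toLex_lt_toLex.2 (Or.inl hlt)

end DiagMajor

section

variable {n : ℕ} {R : Type*}

def toDiagMajor (M : Matrix (Fin n) (Fin n) R) : Lex (DiagMajor n → R) :=
  toLex fun p => M p.row p.col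

theorem toDiagMajor_injective : Injective (toDiagMajor (n := n) (R := R)) :=
  fun _ _ h => Matrix.ext fun i j => congrFun h ⟨i, j⟩

theorem toDiagMajor_mul_mul_lt [Ring R] [LinearOrder R] [IsStrictOrderedRing R]
    {A B X Y : Matrix (Fin n) (Fin n) R} (hA : A.BlockTriangular id) (hB : B.BlockTriangular id)
    (hA₀ : ∀ i, 0 < A i i) (hB₀ : ∀ i, 0 < B i i) (hXY : toDiagMajor X < toDiagMajor Y) :
    toDiagMajor (A * X * B) < toDiagMajor (A * Y * B) := by
  obtain ⟨p, hbefore, hp⟩ := hXY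
  have hdiff : ∀ q : DiagMajor n, q ≤ p →
      (A * Y * B) q.row q.col - (A * X * B) q.row q.col =
        A q.row q.row * (Y - X) q.row q.col * B q.col q.col := by
    intro q hq
    rw [← Matrix.sub_apply, ← Matrix.sub_mul, ← Matrix.mul_sub]
    refine hA.mul_mul_apply_of_eq_zero hB fun k l hk hl hne => sub_eq_zero.2 ?_
    have hkl : (⟨k, l⟩ : DiagMajor n) < p := (DiagMajor.mk_lt_mk_of_le_of_le hk hl hne).trans_le hq
    exact (hbefore ⟨k, l⟩ hkl).symm
  refine ⟨p, fun q hq => ?_, ?_⟩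
  · have h := hdiff q hq.le
    rw [Matrix.sub_apply, show Y q.row q.col = X q.row q.col from (hbefore q hq).symm, sub_self,
      mul_zero, zero_mul, sub_eq_zero] at h
    exact h.symm
  · have h := hdiff p le_rfl
    rw [Matrix.sub_apply] at h
    exact sub_pos.1 (h ▸ mul_pos (mul_pos (hA₀ _) (sub_pos.2 hp)) (hB₀ _))

end

theorem upper_triangular_group_orderable (R : Type*) [CommRing R] [LinearOrder R] [IsStrictOrderedRing R] (n : ℕ) :
    ∃ lo : LinearOrder {M : Matrix (Fin n) (Fin n) R //
        (∀ i j : Fin n, j < i → M i j = 0) ∧ ∀ i : Fin n, 0 < M i i ∧ IsUnit (M i i)},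
      ∀ (A B X Y X' Y' : {M : Matrix (Fin n) (Fin n) R //
          (∀ i j : Fin n, j < i → M i j = 0) ∧ ∀ i : Fin n, 0 < M i i ∧ IsUnit (M i i)}),
        X'.val = A.val * X.val * B.val → Y'.val = A.val * Y.val * B.val →
        lo.lt X Y → lo.lt X' Y' := by
  refine ⟨LinearOrder.lift' (fun M => toDiagMajor M.val)
    (toDiagMajor_injective.comp Subtype.val_injective), ?_⟩
  intro A B X Y X' Y' hX' hY' hXY
  change toDiagMajor X'.val < toDiagMajor Y'.val
  rw [hX', hY']
  exact toDiagMajor_mul_mul_lt (fun i j h => A.2.1 i j h) (fun i j h => B.2.1 i j h)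
    (fun i => (A.2.2 i).1) (fun i => (B.2.2 i).1) hXY
end

section
/- Let L be an integral domain containing an element a with a ≠ 0 and a ≠ 1. Let x_{12}, x_{13}, x_{14}, x_{23}, x_{24}, x_{34} be algebraically independent transcendental elements over the prime field, and let X be the 4×4 upper unitriangular matrix with these entries above the diagonal. Let A = diag(1, a, 1, a). Then every entry of B = X⁻¹ A X on or above the main diagonal is nonzero. -/
set_option maxHeartbeats 1000000 in
lemma conj_aux {K : Type*} [CommRing K] (X A : Matrix (Fin 4) (Fin 4) K)
    (x01 x02 x03 x12 x13 x23 c : K)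
    (hX : X = !![1,x01,x02,x03; 0,1,x12,x13; 0,0,1,x23; 0,0,0,1])
    (hA : A = Matrix.diagonal ![1,c,1,c]) :
    X⁻¹ * A * X = !![1, (1-c)*x01, (1-c)*(x01*x12), (1-c)*(x03 + x01*x12*x23 - x02*x23);
                     0, c, (c-1)*x12, (c-1)*(x12*x23);
                     0, 0, 1, (1-c)*x23;
                     0, 0, 0, c] := by
  have hY : X * !![1, -x01, x01*x12 - x02, -x03 + x01*x13 + x02*x23 - x01*x12*x23;
                   0, 1, -x12, x12*x23 - x13;
                   0, 0, 1, -x23;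
                   0, 0, 0, 1] = 1 := by
    subst hX
    ext i j
    fin_cases i <;> fin_cases j <;>
      simp [Matrix.mul_apply, Fin.sum_univ_four, Matrix.one_apply, Matrix.vecHead, Matrix.vecTail] <;> ring
  rw [Matrix.inv_eq_right_inv hY]
  subst hX hA
  ext i j
  fin_cases i <;> fin_cases j <;>
    simp (config := { decide := true }) [Matrix.mul_apply, Fin.sum_univ_four, Matrix.diagonal_apply, Matrix.vecMul, dotProduct, Matrix.vecHead, Matrix.vecTail] <;> ring

set_option maxHeartbeats 1000000 in
theorem conjugate_diag_entries_nonzero (L : Type*) [CommRing L] [IsDomain L]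
    (a : L) (ha0 : a ≠ 0) (ha1 : a ≠ 1)
    (X A : Matrix (Fin 4) (Fin 4) (FractionRing (MvPolynomial (Fin 4 × Fin 4) L)))
    (hX : ∀ i j : Fin 4, X i j =
      if i = j then 1
      else if i < j then
        algebraMap (MvPolynomial (Fin 4 × Fin 4) L)
          (FractionRing (MvPolynomial (Fin 4 × Fin 4) L)) (MvPolynomial.X (i, j))
      else 0)
    (hA : A = Matrix.diagonal
      ![1, algebraMap (MvPolynomial (Fin 4 × Fin 4) L)
            (FractionRing (MvPolynomial (Fin 4 × Fin 4) L)) (MvPolynomial.C a),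
        1, algebraMap (MvPolynomial (Fin 4 × Fin 4) L)
            (FractionRing (MvPolynomial (Fin 4 × Fin 4) L)) (MvPolynomial.C a)]) :
    ∀ i k : Fin 4, i ≤ k → (X⁻¹ * A * X) i k ≠ 0 := by
  intro i k hik
  have hfinj : Function.Injective (algebraMap (MvPolynomial (Fin 4 × Fin 4) L)
      (FractionRing (MvPolynomial (Fin 4 × Fin 4) L))) :=
    IsFractionRing.injective _ _
  have hX' : X = !![1, algebraMap (MvPolynomial (Fin 4 × Fin 4) L) (FractionRing (MvPolynomial (Fin 4 × Fin 4) L)) (MvPolynomial.X ((0:Fin 4),(1:Fin 4))),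
                       algebraMap (MvPolynomial (Fin 4 × Fin 4) L) (FractionRing (MvPolynomial (Fin 4 × Fin 4) L)) (MvPolynomial.X ((0:Fin 4),(2:Fin 4))),
                       algebraMap (MvPolynomial (Fin 4 × Fin 4) L) (FractionRing (MvPolynomial (Fin 4 × Fin 4) L)) (MvPolynomial.X ((0:Fin 4),(3:Fin 4)));
                    0, 1, algebraMap (MvPolynomial (Fin 4 × Fin 4) L) (FractionRing (MvPolynomial (Fin 4 × Fin 4) L)) (MvPolynomial.X ((1:Fin 4),(2:Fin 4))),
                          algebraMap (MvPolynomial (Fin 4 × Fin 4) L) (FractionRing (MvPolynomial (Fin 4 × Fin 4) L)) (MvPolynomial.X ((1:Fin 4),(3:Fin 4)));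
                    0, 0, 1, algebraMap (MvPolynomial (Fin 4 × Fin 4) L) (FractionRing (MvPolynomial (Fin 4 × Fin 4) L)) (MvPolynomial.X ((2:Fin 4),(3:Fin 4)));
                    0, 0, 0, 1] := by
    ext i j
    fin_cases i <;> fin_cases j <;> simp [hX, Matrix.vecHead, Matrix.vecTail]
  have hB := conj_aux X A _ _ _ _ _ _ _ hX' hA
  rw [hB]
  -- basic nonvanishing facts
  have hc1 : (1 : FractionRing (MvPolynomial (Fin 4 × Fin 4) L)) -
      algebraMap (MvPolynomial (Fin 4 × Fin 4) L) (FractionRing (MvPolynomial (Fin 4 × Fin 4) L)) (MvPolynomial.C a) ≠ 0 := by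
    rw [sub_ne_zero]
    intro h
    apply ha1
    have := hfinj (h.symm.trans (map_one _).symm)
    exact MvPolynomial.C_injective _ _ (by simpa using this)
  have hc1' : algebraMap (MvPolynomial (Fin 4 × Fin 4) L)
      (FractionRing (MvPolynomial (Fin 4 × Fin 4) L)) (MvPolynomial.C a) - 1 ≠ 0 := by
    intro h
    apply hc1
    rw [sub_eq_zero] at h ⊢
    exact h.symm
  have hc0 : algebraMap (MvPolynomial (Fin 4 × Fin 4) L)
      (FractionRing (MvPolynomial (Fin 4 × Fin 4) L)) (MvPolynomial.C a) ≠ 0 := by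
    rw [map_ne_zero_iff _ hfinj, MvPolynomial.C_ne_zero]
    exact ha0
  have hxv : ∀ v : Fin 4 × Fin 4, algebraMap (MvPolynomial (Fin 4 × Fin 4) L)
      (FractionRing (MvPolynomial (Fin 4 × Fin 4) L)) (MvPolynomial.X v) ≠ 0 := by
    intro v
    rw [map_ne_zero_iff _ hfinj]
    exact MvPolynomial.X_ne_zero v
  have hhard : algebraMap (MvPolynomial (Fin 4 × Fin 4) L) (FractionRing (MvPolynomial (Fin 4 × Fin 4) L)) (MvPolynomial.X ((0:Fin 4),(3:Fin 4))) +
      algebraMap (MvPolynomial (Fin 4 × Fin 4) L) (FractionRing (MvPolynomial (Fin 4 × Fin 4) L)) (MvPolynomial.X ((0:Fin 4),(1:Fin 4))) *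
        algebraMap (MvPolynomial (Fin 4 × Fin 4) L) (FractionRing (MvPolynomial (Fin 4 × Fin 4) L)) (MvPolynomial.X ((1:Fin 4),(2:Fin 4))) *
        algebraMap (MvPolynomial (Fin 4 × Fin 4) L) (FractionRing (MvPolynomial (Fin 4 × Fin 4) L)) (MvPolynomial.X ((2:Fin 4),(3:Fin 4))) -
      algebraMap (MvPolynomial (Fin 4 × Fin 4) L)
        (FractionRing (MvPolynomial (Fin 4 × Fin 4) L))
        (MvPolynomial.X ((0:Fin 4),(2:Fin 4))) *
        algebraMap (MvPolynomial (Fin 4 × Fin 4) L) (FractionRing (MvPolynomial (Fin 4 × Fin 4) L)) (MvPolynomial.X ((2:Fin 4),(3:Fin 4))) ≠ 0 := by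
    rw [← map_mul, ← map_mul, ← map_mul, ← map_add, ← map_sub,
      map_ne_zero_iff _ hfinj]
    intro h
    have h2 := congrArg (MvPolynomial.eval
      (fun v : Fin 4 × Fin 4 => if v = ((0:Fin 4),(3:Fin 4)) then (1:L) else 0)) h
    simp (config := { decide := true }) at h2
  fin_cases i <;> fin_cases k <;>
    first
    | exact absurd hik (by decide)
    | (simp only [Matrix.cons_val', Matrix.cons_val_zero, Matrix.cons_val_one,
        Matrix.head_cons, Matrix.empty_val', Matrix.cons_val_fin_one,
        Matrix.head_fin_const, Matrix.cons_val_two, Matrix.cons_val_three,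
        Matrix.tail_cons, Matrix.of_apply]
       first
       | exact one_ne_zero
       | exact hc0
       | exact mul_ne_zero hc1 (hxv _)
       | exact mul_ne_zero hc1' (hxv _)
       | exact mul_ne_zero hc1 (mul_ne_zero (hxv _) (hxv _))
       | exact mul_ne_zero hc1' (mul_ne_zero (hxv _) (hxv _))
       | exact mul_ne_zero hc1 hhard)
end

section
/- A bi-ordered group has no zero divisors in its group ring over any integral domain; more precisely, if G is a group with a bi-invariant linear order and R is an integral domain (or a field), then the group ring R[G] is a domain. -/
theorem biordered_group_ring_domain (G R : Type*) [Group G] [LinearOrder G]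
    (hG : ∀ a b x y : G, x < y → a * x * b < a * y * b)
    [CommRing R] [IsDomain R] :
    ∀ f g : MonoidAlgebra R G, f ≠ 0 → g ≠ 0 → f * g ≠ 0 := by
  haveI : MulLeftStrictMono G := ⟨fun a x y h => by simpa using hG a 1 x y h⟩
  intro f g hf hg
  exact mul_ne_zero hf hg
end

section
/- Let K be a field, G and H groups, and suppose the group algebra K[G] is a domain. If Frac(K[G]) denotes its field of fractions and M is a bi-ordered group, and Frac(K[G]) is a linearly ordered field, then the group algebra Frac(K[G])[M] is a linearly ordered ring (in particular a domain). -/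
/-!
Order `R[M]` colexicographically, so that `f > 0` iff the coefficient of `f` at the largest
element of its support is positive. In a bi-ordered monoid the largest element of
`supp f * supp g` is `max (supp f) * max (supp g)`, and it is reached by exactly one pair, so
leading coefficients multiply. Hence positives are closed under products and `R[M]` is a
linearly ordered ring, in particular without zero divisors.
-/

open Finsupp

theorem UniqueMul.of_forall_le {M : Type*} [Mul M] [LinearOrder M] [MulLeftStrictMono M]
    [MulRightStrictMono M] {A B : Finset M} {a b : M} (hA : ∀ x ∈ A, x ≤ a)
    (hB : ∀ y ∈ B, y ≤ b) : UniqueMul A B a b := by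
  have := mulLeftMono_of_mulLeftStrictMono M
  intro x y hx hy hxy
  obtain hxa | rfl := (hA x hx).lt_or_eq
  · exact absurd hxy (mul_lt_mul_of_lt_of_le hxa (hB y hy)).ne
  obtain hyb | rfl := (hB y hy).lt_or_eq
  · exact absurd hxy (mul_lt_mul_right hyb x).ne
  · exact ⟨rfl, rfl⟩

theorem Finsupp.le_of_mem_support_of_forall_lt {α N : Type*} [LinearOrder α] [Zero N]
    {f : α →₀ N} {a : α} (hf : ∀ j, a < j → f j = 0) {x : α} (hx : x ∈ f.support) :
    x ≤ a :=
  not_lt.mp fun h => mem_support_iff.mp hx (hf x h)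

namespace MonoidAlgebra

variable {R M : Type*}

section LeadingTerm

variable [Semiring R] [Mul M] [LinearOrder M] [MulLeftStrictMono M] [MulRightStrictMono M]
  {f g : R[M]} {a b : M}

lemma coeff_mul_eq_zero_of_lt (hf : ∀ j, a < j → f.coeff j = 0)
    (hg : ∀ j, b < j → g.coeff j = 0) {j : M} (hj : a * b < j) : (f * g).coeff j = 0 := by
  classical
  have := mulLeftMono_of_mulLeftStrictMono M
  have := mulRightMono_of_mulRightStrictMono M
  refine notMem_support_iff.mp fun hmem => hj.not_ge ?_
  obtain ⟨x, hx, y, hy, rfl⟩ := Finset.mem_mul.mp (support_coeff_mul_subset f g hmem)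
  exact mul_le_mul' (le_of_mem_support_of_forall_lt hf hx) (le_of_mem_support_of_forall_lt hg hy)

lemma coeff_mul_mul_of_forall_lt (hf : ∀ j, a < j → f.coeff j = 0)
    (hg : ∀ j, b < j → g.coeff j = 0) : (f * g).coeff (a * b) = f.coeff a * g.coeff b :=
  coeff_mul_mul_of_uniqueMul <| .of_forall_le (fun _ => le_of_mem_support_of_forall_lt hf)
    fun _ => le_of_mem_support_of_forall_lt hg

lemma toColex_coeff_mul_pos [PartialOrder R] [PosMulStrictMono R]
    (hf : 0 < toColex f.coeff) (hg : 0 < toColex g.coeff) : 0 < toColex (f * g).coeff := by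
  simp only [Colex.lt_iff, ofColex_toColex, ofColex_zero, coe_zero, Pi.zero_apply,
    eq_comm (a := (0 : R))] at hf hg ⊢
  obtain ⟨a, hfa, ha⟩ := hf
  obtain ⟨b, hgb, hb⟩ := hg
  refine ⟨a * b, fun _ => coeff_mul_eq_zero_of_lt hfa hgb, ?_⟩
  rw [coeff_mul_mul_of_forall_lt hfa hgb]
  exact mul_pos ha hb

end LeadingTerm

variable (R M) in
abbrev colexLinearOrder [Semiring R] [LinearOrder R] [LinearOrder M] : LinearOrder R[M] :=
  LinearOrder.lift' (fun f => toColex f.coeff) (toColex.injective.comp coeff_injective)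

theorem isStrictOrderedRing_colexLinearOrder [Ring R] [LinearOrder R] [IsStrictOrderedRing R]
    [Monoid M] [LinearOrder M] [MulLeftStrictMono M] [MulRightStrictMono M] :
    letI := colexLinearOrder R M
    IsStrictOrderedRing R[M] :=
  letI := colexLinearOrder R M
  haveI : IsOrderedCancelAddMonoid R[M] :=
    Function.Injective.isOrderedCancelAddMonoid (fun f => toColex f.coeff) (fun _ _ => rfl) .rfl
  haveI : ZeroLEOneClass R[M] := ⟨toColex_monotone (single_nonneg.mpr zero_le_one)⟩
  .of_mul_pos fun _ _ => toColex_coeff_mul_pos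

end MonoidAlgebra

theorem IsStrictOrderedRing.of_add_lt_add_left_of_mul_lt_mul_of_pos_left {R : Type*} [Ring R]
    [LinearOrder R] [Nontrivial R] (hadd : ∀ x y z : R, x < y → x + z < y + z)
    (hmul : ∀ a x y : R, 0 < a → x < y → a * x < a * y) : IsStrictOrderedRing R :=
  haveI : IsOrderedAddMonoid R :=
    { add_le_add_left := fun x y hxy z =>
        hxy.lt_or_eq.elim (fun h => (hadd x y z h).le) fun h => h ▸ le_rfl }
  haveI : ZeroLEOneClass R := ⟨not_lt.mp fun h => by
    have hneg : (0 : R) < -1 := by simpa using hadd 1 0 (-1) h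
    exact (hmul (-1) 1 0 hneg h).not_gt (by simpa using hneg)⟩
  .of_mul_pos fun a b ha hb => by simpa using hmul a 0 b ha hb

theorem frac_group_algebra_ordered_ring_general (K G M : Type*) [Field K] [CommGroup G] [Group M]
    [LinearOrder M] (hM : ∀ a b x y : M, x < y → a * x * b < a * y * b)
    (loF : LinearOrder (FractionRing (MonoidAlgebra K G)))
    (haddF : ∀ x y z : FractionRing (MonoidAlgebra K G), loF.lt x y → loF.lt (x + z) (y + z))
    (hmulF : ∀ a x y : FractionRing (MonoidAlgebra K G),
      loF.lt 0 a → loF.lt x y → loF.lt (a * x) (a * y)) :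
    ∃ lo : LinearOrder (MonoidAlgebra (FractionRing (MonoidAlgebra K G)) M),
      (∀ x y z, lo.lt x y → lo.lt (x + z) (y + z)) ∧
      (∀ a x y, lo.lt 0 a → lo.lt x y → lo.lt (a * x) (a * y) ∧ lo.lt (x * a) (y * a)) ∧
      (∀ f g : MonoidAlgebra (FractionRing (MonoidAlgebra K G)) M,
        f ≠ 0 → g ≠ 0 → f * g ≠ 0) := by
  let := loF
  have := IsStrictOrderedRing.of_add_lt_add_left_of_mul_lt_mul_of_pos_left haddF hmulF
  have : MulLeftStrictMono M := ⟨fun a x y h => by simpa using hM a 1 x y h⟩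
  have : MulRightStrictMono M := ⟨fun b x y h => by simpa using hM 1 b x y h⟩
  let := MonoidAlgebra.colexLinearOrder (FractionRing (MonoidAlgebra K G)) M
  have : IsStrictOrderedRing (MonoidAlgebra (FractionRing (MonoidAlgebra K G)) M) :=
    MonoidAlgebra.isStrictOrderedRing_colexLinearOrder
  exact ⟨inferInstance, fun x y z h => add_lt_add_left h z,
    fun a x y ha h => ⟨mul_lt_mul_of_pos_left h ha, mul_lt_mul_of_pos_right h ha⟩,
    fun _ _ => mul_ne_zero⟩

theorem frac_group_algebra_ordered_ring (K G M : Type*) [Field K] [CommGroup G] [Group M]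
    [IsDomain (MonoidAlgebra K G)]
    [LinearOrder M] (hM : ∀ a b x y : M, x < y → a * x * b < a * y * b)
    (loF : LinearOrder (FractionRing (MonoidAlgebra K G)))
    (haddF : ∀ x y z : FractionRing (MonoidAlgebra K G), loF.lt x y → loF.lt (x + z) (y + z))
    (hmulF : ∀ a x y : FractionRing (MonoidAlgebra K G),
      loF.lt 0 a → loF.lt x y → loF.lt (a * x) (a * y)) :
    ∃ lo : LinearOrder (MonoidAlgebra (FractionRing (MonoidAlgebra K G)) M),
      (∀ x y z, lo.lt x y → lo.lt (x + z) (y + z)) ∧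
      (∀ a x y, lo.lt 0 a → lo.lt x y → lo.lt (a * x) (a * y) ∧ lo.lt (x * a) (y * a)) ∧
      (∀ f g : MonoidAlgebra (FractionRing (MonoidAlgebra K G)) M,
        f ≠ 0 → g ≠ 0 → f * g ≠ 0) :=
  frac_group_algebra_ordered_ring_general K G M hM loF haddF hmulF
end
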